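/- Let (P, ≼, ∧, ∨) be a locally finite lattice with least element 0̂, let f be a semimultiplicative complex-valued function on P with f(x) ≠ 0 for all x ∈ P, set g(x) = 1/f(x), and let S = {x_1, …, x_n} be a finite lower closed subset of P with distinct elements, indexed so that x_i ≼ x_j only if i ≤ j. Assume l_i = ∑_{z ≼ x_i, z ⋠ x_j for all j < i} (g_d * μ)(0̂, z) ≠ 0 for all i. Then every [S]_f-eigenvalue λ ∈ ℂ of (S)_f satisfies |λ| ≤ c_f⁻¹ · m_g⁻¹ · F_{n+1} (F_{n+3} − 2), where c_f = min_{1≤i,j≤n} |f(x_i ∨ x_j)|, m_g = min_{1≤i≤n} |l_i|, and (F_k) is the Fibonacci sequence with F_1 = F_2 = 1 and F_{k+2} = F_k + F_{k+1}. -/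

import Mathlib

/-!
Write `g = 1 / f`. Semimultiplicativity gives `(S)_f = Δ [S]_g Δ` and `[S]_f = Δ (S)_g Δ` with
`Δ = diag (f x_i)`, so `λ` is also an `(S)_g`-eigenvalue of `[S]_g`, with eigenvector `w = Δ v`.
Since `S` is lower closed, `l_k = (g * μ) (x_k)`, and Möbius inversion factors
`(S)_g = E diag(l) Eᵀ` with `E_ik = [x_k ≤ x_i]`, a unit lower triangular `0/1` matrix.
For `B = E⁻¹` and `u = Eᵀ w` the pencil becomes `(B [S]_g Bᵀ) u = λ diag(l) u`, and a
coordinate of `u` of maximal modulus gives `|λ| |l_k| ≤ c_f⁻¹ ‖B_k‖₁ ∑_j ‖B_j‖₁`.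

Finally `|B_ij| ≤ F_{i-j}` below the diagonal: forward substitution writes each new entry of a
column of `B` as `-∑ e_ik B_kj` with `e_ik ∈ [0, 1]`, which lies between minus the sum of the
positive parts and the sum of the negative parts of the entries above it, and these two sums grow
like Fibonacci numbers. Hence row `i` of `B` has `ℓ¹`-norm at most `F_{i+2} ≤ F_{n+1}`, and all
rows together at most `F_{n+3} - 2`.
-/

open Finset Matrix Nat

section Fibonacci

variable {K : Type*} [CommRing K] [LinearOrder K] [IsStrictOrderedRing K]

theorem sum_mul_le_sum_posPart {ι : Type*} (s : Finset ι) {a : ι → K} (b : ι → K)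
    (ha : ∀ k ∈ s, a k ∈ Set.Icc 0 1) : ∑ k ∈ s, a k * b k ≤ ∑ k ∈ s, (b k)⁺ := by
  refine sum_le_sum fun k hk => ?_
  obtain ⟨h0, h1⟩ := ha k hk
  have := posPart_sub_negPart (b k)
  have := posPart_nonneg (b k)
  have := negPart_nonneg (b k)
  nlinarith

theorem neg_sum_negPart_le_sum_mul {ι : Type*} (s : Finset ι) {a : ι → K} (b : ι → K)
    (ha : ∀ k ∈ s, a k ∈ Set.Icc 0 1) : -∑ k ∈ s, (b k)⁻ ≤ ∑ k ∈ s, a k * b k := by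
  have := sum_mul_le_sum_posPart s (fun k => -b k) ha
  simp only [posPart_neg, mul_neg, sum_neg_distrib] at this
  linarith

theorem abs_le_fib_of_eq_neg_sum {a : ℕ → ℕ → K} (ha : ∀ d k, a d k ∈ Set.Icc 0 1)
    {b : ℕ → K} {N : ℕ} (hb0 : b 0 = 1)
    (hb : ∀ d, 0 < d → d < N → b d = -∑ k ∈ range d, a d k * b k)
    {d : ℕ} (hd : 0 < d) (hdN : d < N) : |b d| ≤ fib d := by
  set p : ℕ → K := fun D => ∑ k ∈ range D, (b k)⁺
  set q : ℕ → K := fun D => ∑ k ∈ range D, (b k)⁻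
  have bracket : ∀ d, 0 < d → d < N → -p d ≤ b d ∧ b d ≤ q d := by
    intro d hd hdN
    rw [hb d hd hdN]
    exact ⟨neg_le_neg (sum_mul_le_sum_posPart _ b fun k _ => ha d k),
      neg_le.mp (neg_sum_negPart_le_sum_mul _ b fun k _ => ha d k)⟩
  have key : ∀ D, 1 ≤ D → D ≤ N → p D ≤ fib D ∧ q D ≤ fib D ∧ p D + q D ≤ fib (D + 1) := by
    intro D hD
    induction D, hD using Nat.le_induction with
    | base => intro _; simp [p, q, hb0]
    | succ D hD ih =>
      intro hDN
      obtain ⟨hp, hq, hpq⟩ := ih (by omega)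
      obtain ⟨lo, hi⟩ := bracket D (by omega) (by omega)
      have hpos : (b D)⁺ ≤ q D := sup_le hi (sum_nonneg fun k _ => negPart_nonneg _)
      have hneg : (b D)⁻ ≤ p D := sup_le (by linarith) (sum_nonneg fun k _ => posPart_nonneg _)
      have habs := posPart_add_negPart (b D)
      have hfib : (fib (D + 2) : K) = fib D + fib (D + 1) := by exact_mod_cast fib_add_two
      have hbD : |b D| ≤ fib D := abs_le.2 ⟨by linarith, by linarith⟩
      simp only [p, q, sum_range_succ]
      exact ⟨by linarith, by linarith, by linarith⟩
  obtain ⟨hp, hq, -⟩ := key d hd hdN.le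
  obtain ⟨lo, hi⟩ := bracket d hd hdN
  exact abs_le.2 ⟨by linarith, by linarith⟩

theorem sum_range_fib_add_two (n : ℕ) : ∑ j ∈ range n, fib (j + 2) + 2 = fib (n + 3) := by
  rw [fib_succ_eq_succ_sum, sum_range_succ', sum_range_succ']
  simp [add_assoc]

end Fibonacci

section ForwardSubstitution

variable {K : Type*} [CommRing K] {a b : ℕ → ℕ → K} {N : ℕ}

theorem eq_ite_sub_sum_of_sum_mul_eq_ite
    (hlow : ∀ i k, i < k → a i k = 0) (hdiag : ∀ i < N, a i i = 1)
    (hab : ∀ i < N, ∀ j < N, ∑ k ∈ range N, a i k * b k j = if i = j then 1 else 0) :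
    ∀ i < N, ∀ j < N, b i j = (if i = j then 1 else 0) - ∑ k ∈ range i, a i k * b k j := by
  intro i hi j hj
  have htail : ∑ k ∈ Ico (i + 1) N, a i k * b k j = 0 :=
    sum_eq_zero fun k hk => by rw [hlow i k (by simp at hk; omega), zero_mul]
  rw [← hab i hi j hj, ← sum_range_add_sum_Ico _ (show i + 1 ≤ N by omega), htail,
    sum_range_succ, hdiag i hi]
  ring

theorem eq_zero_of_lt_of_eq_ite_sub_sum
    (hrec : ∀ i < N, ∀ j < N, b i j = (if i = j then 1 else 0) - ∑ k ∈ range i, a i k * b k j) :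
    ∀ i j, i < j → j < N → b i j = 0 := by
  intro i
  induction i using Nat.strong_induction_on with
  | _ i ih =>
    intro j hij hjN
    rw [hrec i (by omega) j hjN, if_neg hij.ne, zero_sub, neg_eq_zero]
    exact sum_eq_zero fun k hk => by
      rw [ih k (mem_range.1 hk) j (by simp at hk; omega) hjN, mul_zero]

theorem diag_eq_one_of_eq_ite_sub_sum
    (hrec : ∀ i < N, ∀ j < N, b i j = (if i = j then 1 else 0) - ∑ k ∈ range i, a i k * b k j)
    {j : ℕ} (hj : j < N) : b j j = 1 := by
  rw [hrec j hj j hj, if_pos rfl, sub_eq_self]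
  exact sum_eq_zero fun k hk => by
    rw [eq_zero_of_lt_of_eq_ite_sub_sum hrec k j (mem_range.1 hk) hj, mul_zero]

end ForwardSubstitution

section FibonacciBound

variable {K : Type*} [CommRing K] [LinearOrder K] [IsStrictOrderedRing K]
  {a b : ℕ → ℕ → K} {N : ℕ}

theorem abs_le_fib_of_eq_ite_sub_sum (ha : ∀ i k, a i k ∈ Set.Icc 0 1)
    (hrec : ∀ i < N, ∀ j < N, b i j = (if i = j then 1 else 0) - ∑ k ∈ range i, a i k * b k j)
    {i j : ℕ} (hji : j < i) (hiN : i < N) : |b i j| ≤ fib (i - j) := by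
  obtain ⟨d, rfl⟩ := Nat.exists_eq_add_of_lt hji
  rw [show j + d + 1 - j = d + 1 by omega]
  refine abs_le_fib_of_eq_neg_sum (a := fun d k => a (j + d) (j + k)) (b := fun d => b (j + d) j)
    (N := N - j) (d := d + 1) (fun d k => ha _ _) (diag_eq_one_of_eq_ite_sub_sum hrec (by omega))
    ?_ (by omega) (by omega)
  intro d hd hdN
  have habove : ∑ k ∈ range j, a (j + d) k * b k j = 0 := sum_eq_zero fun k hk => by
    rw [eq_zero_of_lt_of_eq_ite_sub_sum hrec k j (mem_range.1 hk) (by omega), mul_zero]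
  rw [hrec _ (by omega) j (by omega), if_neg (by omega), sum_range_add, habove]
  simp

theorem sum_abs_le_fib_of_eq_ite_sub_sum (ha : ∀ i k, a i k ∈ Set.Icc 0 1)
    (hrec : ∀ i < N, ∀ j < N, b i j = (if i = j then 1 else 0) - ∑ k ∈ range i, a i k * b k j)
    {i : ℕ} (hi : i < N) : ∑ j ∈ range N, |b i j| ≤ fib (i + 2) := by
  have htail : ∑ j ∈ Ico (i + 1) N, |b i j| = 0 := sum_eq_zero fun j hj => by
    simp only [mem_Ico] at hj
    rw [eq_zero_of_lt_of_eq_ite_sub_sum hrec i j (by omega) hj.2, abs_zero]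
  have hbelow : ∑ j ∈ range i, |b i j| ≤ ∑ j ∈ range i, (fib (j + 1) : K) := by
    rw [← sum_range_reflect (fun j => (fib (j + 1) : K))]
    exact sum_le_sum fun j hj => by
      have := mem_range.1 hj
      rw [show i - 1 - j + 1 = i - j by omega]
      exact abs_le_fib_of_eq_ite_sub_sum ha hrec (by omega) hi
  have hfib : (fib (i + 2) : K) = ∑ j ∈ range i, (fib (j + 1) : K) + 1 := by
    rw [fib_succ_eq_succ_sum, sum_range_succ']
    push_cast
    simp
  rw [← sum_range_add_sum_Ico _ (show i + 1 ≤ N by omega), htail, sum_range_succ,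
    diag_eq_one_of_eq_ite_sub_sum hrec hi, hfib]
  simpa using hbelow

theorem sum_abs_inv_apply_le_fib {n : ℕ} {M : Matrix (Fin n) (Fin n) K}
    (hlow : M.IsLowerTriangular) (hdiag : ∀ i, M i i = 1) (hunit : ∀ i k, M i k ∈ Set.Icc 0 1)
    (i : Fin n) : ∑ j, |M⁻¹ i j| ≤ fib (i + 2) := by
  have hinv : M * M⁻¹ = 1 :=
    M.mul_nonsing_inv (by simp [M.det_of_isLowerTriangular hlow, hdiag])
  -- extension by zero to `ℕ`-indexed arrays, on which forward substitution is set up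
  let extend : Matrix (Fin n) (Fin n) K → ℕ → ℕ → K := fun A i j =>
    if h : i < n ∧ j < n then A ⟨i, h.1⟩ ⟨j, h.2⟩ else 0
  have hext (A : Matrix (Fin n) (Fin n) K) (i j : Fin n) : extend A i j = A i j := by simp [extend]
  have hrec : ∀ i < n, ∀ j < n, extend M⁻¹ i j =
      (if i = j then 1 else 0) - ∑ k ∈ range i, extend M i k * extend M⁻¹ k j := by
    refine eq_ite_sub_sum_of_sum_mul_eq_ite (a := extend M) (fun i k hik => ?_) (fun i hi => ?_) ?_
    · by_cases h : i < n ∧ k < n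
      · simpa [extend, h] using
          hlow (OrderDual.toDual_lt_toDual.2 (show (⟨i, h.1⟩ : Fin n) < ⟨k, h.2⟩ from hik))
      · simp [extend, h]
    · simpa [extend, hi] using hdiag ⟨i, hi⟩
    · intro i hi j hj
      rw [← Fin.sum_univ_eq_sum_range (fun k => extend M i k * extend M⁻¹ k j)]
      simpa [extend, hi, hj, mul_apply, one_apply, Fin.ext_iff] using
        congrFun (congrFun hinv ⟨i, hi⟩) ⟨j, hj⟩
  have hunit_extend : ∀ i k, extend M i k ∈ Set.Icc 0 1 := fun i k => by
    by_cases h : i < n ∧ k < n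
    · simpa [extend, h] using hunit ⟨i, h.1⟩ ⟨k, h.2⟩
    · simp [extend, h]
  have := sum_abs_le_fib_of_eq_ite_sub_sum hunit_extend hrec i.2
  rw [← Fin.sum_univ_eq_sum_range (fun j => |extend M⁻¹ i j|)] at this
  simpa only [hext] using this

end FibonacciBound

section Mobius

variable {P : Type*} [PartialOrder P] [LocallyFiniteOrder P] {R : Type*} [CommRing R]
  {mu : P → P → R}

theorem sum_Icc_mu_eq_ite [DecidableEq P] (hmu_self : ∀ p, mu p p = 1)
    (hmu_lt : ∀ p q : P, p < q → mu p q = -∑ r ∈ Ico p q, mu p r) {p q : P} (hpq : p ≤ q) :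
    ∑ r ∈ Icc p q, mu p r = if p = q then 1 else 0 := by
  rcases hpq.eq_or_lt with rfl | hlt
  · simp [hmu_self]
  · rw [if_neg hlt.ne, ← Ico_insert_right hpq, sum_insert right_notMem_Ico, hmu_lt p q hlt,
      neg_add_cancel]

theorem sum_Icc_bot_sum_mul_mu [OrderBot P] (hmu_self : ∀ p, mu p p = 1)
    (hmu_lt : ∀ p q : P, p < q → mu p q = -∑ r ∈ Ico p q, mu p r) (h : P → R) (y : P) :
    ∑ z ∈ Icc ⊥ y, ∑ w ∈ Icc ⊥ z, h w * mu w z = h y := by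
  classical
  have hswap : ∑ z ∈ Icc ⊥ y, ∑ w ∈ Icc ⊥ z, h w * mu w z
      = ∑ w ∈ Icc ⊥ y, ∑ z ∈ Icc w y, h w * mu w z :=
    sum_comm' fun z w => by simp only [mem_Icc, bot_le, true_and]; grind
  rw [hswap]
  calc ∑ w ∈ Icc ⊥ y, ∑ z ∈ Icc w y, h w * mu w z
      = ∑ w ∈ Icc ⊥ y, if w = y then h w else 0 := sum_congr rfl fun w hw => by
        rw [← mul_sum, sum_Icc_mu_eq_ite hmu_self hmu_lt (mem_Icc.1 hw).2, mul_ite, mul_one,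
          mul_zero]
    _ = h y := by simp

end Mobius

section MeetJoin

variable {P : Type*} {ι : Type*} {R : Type*}

def meetMatrix [Min P] (f : P → R) (x : ι → P) : Matrix ι ι R := of fun i j => f (x i ⊓ x j)

def joinMatrix [Max P] (f : P → R) (x : ι → P) : Matrix ι ι R := of fun i j => f (x i ⊔ x j)

def zetaMatrix (R : Type*) [Zero R] [One R] [LE P] [DecidableRel ((· ≤ ·) : P → P → Prop)]
    (x : ι → P) : Matrix ι ι R :=
  of fun i k => if x k ≤ x i then 1 else 0

variable [Lattice P] [Fintype ι] [DecidableEq ι] {K : Type*} [Field K] {f : P → K}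

theorem meetMatrix_eq_diagonal_mul_joinMatrix_inv_mul_diagonal (hf : ∀ p, f p ≠ 0)
    (hsemi : ∀ p q : P, f (p ⊓ q) * f (p ⊔ q) = f p * f q) (x : ι → P) :
    meetMatrix f x = diagonal (f ∘ x) * joinMatrix f⁻¹ x * diagonal (f ∘ x) := by
  ext i j
  simp only [meetMatrix, joinMatrix, diagonal_mul, mul_diagonal, of_apply, Function.comp_apply,
    Pi.inv_apply]
  field_simp [hf]
  linear_combination hsemi (x i) (x j)

theorem joinMatrix_eq_diagonal_mul_meetMatrix_inv_mul_diagonal (hf : ∀ p, f p ≠ 0)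
    (hsemi : ∀ p q : P, f (p ⊓ q) * f (p ⊔ q) = f p * f q) (x : ι → P) :
    joinMatrix f x = diagonal (f ∘ x) * meetMatrix f⁻¹ x * diagonal (f ∘ x) := by
  ext i j
  simp only [meetMatrix, joinMatrix, diagonal_mul, mul_diagonal, of_apply, Function.comp_apply,
    Pi.inv_apply]
  field_simp [hf]
  linear_combination hsemi (x i) (x j)

theorem joinMatrix_inv_mulVec_eq_smul (hf : ∀ p, f p ≠ 0)
    (hsemi : ∀ p q : P, f (p ⊓ q) * f (p ⊔ q) = f p * f q) {x : ι → P} {lam : K} {v : ι → K}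
    (heig : meetMatrix f x *ᵥ v = lam • joinMatrix f x *ᵥ v) :
    joinMatrix f⁻¹ x *ᵥ (diagonal (f ∘ x) *ᵥ v) =
      lam • meetMatrix f⁻¹ x *ᵥ (diagonal (f ∘ x) *ᵥ v) := by
  rw [meetMatrix_eq_diagonal_mul_joinMatrix_inv_mul_diagonal hf hsemi,
    joinMatrix_eq_diagonal_mul_meetMatrix_inv_mul_diagonal hf hsemi] at heig
  have := congrArg (diagonal (f ∘ x)⁻¹ *ᵥ ·) heig
  simpa [mulVec_mulVec, mulVec_smul, ← Matrix.mul_assoc, diagonal_mul_diagonal, hf] using this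

end MeetJoin

section Zeta

variable {P : Type*} [PartialOrder P] [DecidableRel ((· ≤ ·) : P → P → Prop)] {ι : Type*}
  {x : ι → P}

theorem zetaMatrix_isLowerTriangular [LinearOrder ι] {R : Type*} [Zero R] [One R]
    (hord : ∀ i j, x i ≤ x j → i ≤ j) : (zetaMatrix R x).IsLowerTriangular :=
  fun _ _ hik => if_neg fun h => (hord _ _ h).not_gt hik

theorem zetaMatrix_apply_self {R : Type*} [Zero R] [One R] (i : ι) : zetaMatrix R x i i = 1 :=
  if_pos le_rfl

theorem zetaMatrix_apply_mem_Icc {R : Type*} [Semiring R] [PartialOrder R] [ZeroLEOneClass R]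
    (i k : ι) : zetaMatrix R x i k ∈ Set.Icc 0 1 := by
  simp only [zetaMatrix, of_apply]
  split_ifs <;> simp

theorem zetaMatrix_map {R S : Type*} [Semiring R] [Semiring S] (f : R →+* S) :
    (zetaMatrix R x).map f = zetaMatrix S x := by
  ext i k
  simp [zetaMatrix, apply_ite f]

end Zeta

section LowerClosed

variable {P : Type*} [PartialOrder P] [OrderBot P] [LocallyFiniteOrder P] {ι : Type*}
  {x : ι → P}

theorem sum_filter_le_comp_eq_sum_Icc_bot [Fintype ι] [DecidableRel ((· ≤ ·) : P → P → Prop)]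
    {R : Type*} [AddCommMonoid R] (hinj : Function.Injective x) (hS : IsLowerSet (Set.range x))
    {y : P} (hy : y ∈ Set.range x) (c : P → R) :
    ∑ k with x k ≤ y, c (x k) = ∑ z ∈ Icc ⊥ y, c z := by
  refine sum_nbij x (fun k hk => by simpa using hk) (fun a _ b _ h => hinj h) ?_ fun _ _ => rfl
  intro z hz
  obtain ⟨k, rfl⟩ := hS (by simpa using hz) hy
  exact ⟨k, by simpa using hz, rfl⟩

theorem filter_Icc_bot_eq_singleton [PartialOrder ι]
    (hord : ∀ i j, x i ≤ x j → i ≤ j) (hS : IsLowerSet (Set.range x)) (i : ι)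
    [DecidablePred fun z => ∀ j, j < i → ¬ z ≤ x j] :
    (Icc ⊥ (x i)).filter (fun z => ∀ j, j < i → ¬ z ≤ x j) = {x i} := by
  ext z
  simp only [mem_filter, mem_Icc, bot_le, true_and, mem_singleton]
  constructor
  · rintro ⟨hz, hmin⟩
    obtain ⟨k, rfl⟩ := hS hz ⟨i, rfl⟩
    exact congrArg x (((hord k i hz).lt_or_eq).resolve_left fun hki => hmin k hki le_rfl)
  · rintro rfl
    exact ⟨le_rfl, fun j hj hle => (hord i j hle).not_gt hj⟩

end LowerClosed

section Factorization

variable {P : Type*} [Lattice P] [OrderBot P] [LocallyFiniteOrder P]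
  [DecidableRel ((· ≤ ·) : P → P → Prop)] {ι : Type*} [Fintype ι]
  {R : Type*} [CommRing R] {x : ι → P}

theorem meetMatrix_eq_zetaMatrix_mul_diagonal_mul_transpose [DecidableEq ι] {mu : P → P → R}
    (hmu_self : ∀ p, mu p p = 1) (hmu_lt : ∀ p q : P, p < q → mu p q = -∑ r ∈ Ico p q, mu p r)
    (hinj : Function.Injective x) (hS : IsLowerSet (Set.range x)) (h : P → R) :
    meetMatrix h x = zetaMatrix R x *
      diagonal (fun k => ∑ w ∈ Icc ⊥ (x k), h w * mu w (x k)) * (zetaMatrix R x)ᵀ := by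
  ext i j
  have hmem : x i ⊓ x j ∈ Set.range x := hS inf_le_left ⟨i, rfl⟩
  rw [mul_apply]
  simp only [meetMatrix, zetaMatrix, mul_diagonal, transpose_apply, of_apply,
    ite_mul, one_mul, zero_mul, mul_ite, mul_one, mul_zero, ← ite_and, ← le_inf_iff]
  rw [← sum_filter, inf_comm (x j), sum_filter_le_comp_eq_sum_Icc_bot hinj hS hmem
    (fun z => ∑ w ∈ Icc ⊥ z, h w * mu w z), sum_Icc_bot_sum_mul_mu hmu_self hmu_lt]

end Factorization

section GeneralizedEigenvalue

variable {ι : Type*} [Fintype ι]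

theorem mul_mul_transpose_mulVec_eq_smul [DecidableEq ι] {R : Type*} [CommRing R]
    {E B G : Matrix ι ι R} {d w : ι → R} {lam : R} (hEB : E * B = 1) (hBE : B * E = 1)
    (hw : G *ᵥ w = lam • (E * diagonal d * Eᵀ) *ᵥ w) :
    (B * G * Bᵀ) *ᵥ (Eᵀ *ᵥ w) = lam • diagonal d *ᵥ (Eᵀ *ᵥ w) := by
  have hBEt : Bᵀ * Eᵀ = 1 := by rw [← transpose_mul, hEB, transpose_one]
  rw [← mulVec_mulVec, mulVec_mulVec _ Bᵀ, hBEt, one_mulVec, ← mulVec_mulVec, hw, mulVec_smul,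
    mulVec_mulVec, ← Matrix.mul_assoc, ← Matrix.mul_assoc, hBE, Matrix.one_mul, mulVec_mulVec]

theorem exists_norm_mul_le_sum_norm_of_mulVec_eq_smul [DecidableEq ι] {𝕜 : Type*} [NormedField 𝕜]
    {C : Matrix ι ι 𝕜} {d u : ι → 𝕜} {lam : 𝕜} (hu : u ≠ 0)
    (h : C *ᵥ u = lam • diagonal d *ᵥ u) : ∃ k, ‖lam‖ * ‖d k‖ ≤ ∑ j, ‖C k j‖ := by
  obtain ⟨j, hj⟩ := Function.ne_iff.1 hu
  have : Nonempty ι := ⟨j⟩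
  obtain ⟨k, hk⟩ := Finite.exists_max fun k => ‖u k‖
  have hpos : 0 < ‖u k‖ := (norm_pos_iff.2 hj).trans_le (hk j)
  refine ⟨k, le_of_mul_le_mul_right ?_ hpos⟩
  calc ‖lam‖ * ‖d k‖ * ‖u k‖ = ‖(C *ᵥ u) k‖ := by
        simp [h, mulVec_diagonal, norm_mul, mul_assoc]
    _ ≤ ∑ j, ‖C k j‖ * ‖u j‖ :=
        (norm_sum_le univ fun j => C k j * u j).trans_eq (by simp only [norm_mul])
    _ ≤ (∑ j, ‖C k j‖) * ‖u k‖ := by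
        rw [sum_mul]
        exact sum_le_sum fun j _ => mul_le_mul_of_nonneg_left (hk j) (norm_nonneg _)

theorem sum_norm_mul_mul_transpose_apply_le {𝕜 : Type*} [NormedRing 𝕜] (B G : Matrix ι ι 𝕜)
    {c : ℝ} (hG : ∀ a b, ‖G a b‖ ≤ c) (k : ι) :
    ∑ j, ‖(B * G * Bᵀ) k j‖ ≤ c * (∑ a, ‖B k a‖) * ∑ j, ∑ b, ‖B j b‖ := by
  have hentry : ∀ j, ‖(B * G * Bᵀ) k j‖ ≤ c * (∑ a, ‖B k a‖) * ∑ b, ‖B j b‖ := fun j =>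
    calc ‖(B * G * Bᵀ) k j‖ ≤ ∑ b, ∑ a, ‖B k a‖ * ‖G a b‖ * ‖B j b‖ := by
          simp only [mul_apply, transpose_apply, sum_mul]
          refine (norm_sum_le _ _).trans (sum_le_sum fun b _ => (norm_sum_le _ _).trans ?_)
          exact sum_le_sum fun a _ => (norm_mul_le _ _).trans
            (mul_le_mul_of_nonneg_right (norm_mul_le _ _) (norm_nonneg _))
      _ ≤ ∑ b, ∑ a, ‖B k a‖ * c * ‖B j b‖ := by gcongr with b _ a _; exact hG a b
      _ = c * (∑ a, ‖B k a‖) * ∑ b, ‖B j b‖ := by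
          simp only [mul_sum, sum_mul]
          exact sum_congr rfl fun b _ => sum_congr rfl fun a _ => by ring
  exact (sum_le_sum fun j _ => hentry j).trans_eq (by rw [← mul_sum])

end GeneralizedEigenvalue

theorem exists_norm_mul_le_mul_fib_of_mulVec_eq_smul {𝕜 : Type*} [RCLike 𝕜] {n : ℕ}
    {E : Matrix (Fin n) (Fin n) ℝ} (hlow : E.IsLowerTriangular) (hdiag : ∀ i, E i i = 1)
    (hunit : ∀ i k, E i k ∈ Set.Icc 0 1) {G : Matrix (Fin n) (Fin n) 𝕜} {c : ℝ}
    (hG : ∀ a b, ‖G a b‖ ≤ c) {d w : Fin n → 𝕜} {lam : 𝕜} (hw0 : w ≠ 0)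
    (hw : G *ᵥ w = lam • (E.map (algebraMap ℝ 𝕜) * diagonal d * (E.map (algebraMap ℝ 𝕜))ᵀ) *ᵥ w) :
    ∃ k, ‖lam‖ * ‖d k‖ ≤ c * (fib (n + 1) * (fib (n + 3) - 2)) := by
  have hdet : IsUnit E.det := by simp [E.det_of_isLowerTriangular hlow, hdiag]
  set B := E⁻¹.map (algebraMap ℝ 𝕜)
  have hEB : E.map (algebraMap ℝ 𝕜) * B = 1 := by
    rw [← Matrix.map_mul, E.mul_nonsing_inv hdet, Matrix.map_one _ (map_zero _) (map_one _)]
  have hBE : B * E.map (algebraMap ℝ 𝕜) = 1 := by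
    rw [← Matrix.map_mul, E.nonsing_inv_mul hdet, Matrix.map_one _ (map_zero _) (map_one _)]
  have hu : (E.map (algebraMap ℝ 𝕜))ᵀ *ᵥ w ≠ 0 := fun h => hw0 <| by
    rw [← one_mulVec w, ← transpose_one, ← hEB, transpose_mul, ← mulVec_mulVec, h, mulVec_zero]
  obtain ⟨k, hk⟩ := exists_norm_mul_le_sum_norm_of_mulVec_eq_smul hu
    (mul_mul_transpose_mulVec_eq_smul hEB hBE hw)
  refine ⟨k, hk.trans ?_⟩
  have hR : ∀ i, ∑ j, ‖B i j‖ ≤ fib (i + 2) := fun i => by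
    simpa [B, norm_algebraMap'] using sum_abs_inv_apply_le_fib hlow hdiag hunit i
  have hrow : ∑ j, ‖B k j‖ ≤ fib (n + 1) :=
    (hR k).trans (by exact_mod_cast fib_mono (by omega : k.1 + 2 ≤ n + 1))
  have htotal : ∑ i, ∑ j, ‖B i j‖ ≤ fib (n + 3) - 2 := by
    refine (sum_le_sum fun i _ => hR i).trans_eq ?_
    rw [Fin.sum_univ_eq_sum_range (fun i => (fib (i + 2) : ℝ)), ← sum_range_fib_add_two n]
    push_cast
    ring
  have hc : 0 ≤ c := (norm_nonneg _).trans (hG k k)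
  calc ∑ j, ‖(B * G * Bᵀ) k j‖ ≤ c * (∑ j, ‖B k j‖) * ∑ i, ∑ j, ‖B i j‖ :=
        sum_norm_mul_mul_transpose_apply_le B G hG k
    _ ≤ c * fib (n + 1) * (fib (n + 3) - 2) := by gcongr
    _ = c * (fib (n + 1) * (fib (n + 3) - 2)) := by ring

section Infimum

variable {ι 𝕜 : Type*} [Finite ι] [NormedDivisionRing 𝕜] {F : ι → 𝕜}

theorem iInf_norm_pos [Nonempty ι] (hF : ∀ i, F i ≠ 0) : 0 < ⨅ j, ‖F j‖ := by
  obtain ⟨j, hj⟩ := exists_eq_ciInf_of_finite (f := fun j => ‖F j‖)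
  exact hj ▸ norm_pos_iff.2 (hF j)

theorem norm_inv_le_inv_iInf_norm (hF : ∀ i, F i ≠ 0) (i : ι) :
    ‖(F i)⁻¹‖ ≤ (⨅ j, ‖F j‖)⁻¹ := by
  have : Nonempty ι := ⟨i⟩
  rw [norm_inv]
  exact inv_anti₀ (iInf_norm_pos hF) (ciInf_le (Finite.bddBelow_range _) i)

theorem le_inv_iInf_norm_mul_of_mul_norm_le (hF : ∀ i, F i ≠ 0) {a C : ℝ} (ha : 0 ≤ a) (i : ι)
    (h : a * ‖F i‖ ≤ C) : a ≤ (⨅ j, ‖F j‖)⁻¹ * C := by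
  have : Nonempty ι := ⟨i⟩
  rw [inv_mul_eq_div, le_div_iff₀ (iInf_norm_pos hF)]
  exact (mul_le_mul_of_nonneg_left (ciInf_le (Finite.bddBelow_range _) i) ha).trans h

end Infimum

theorem local_upper_bound_meet_wrt_join_general
    {P : Type*} [Lattice P] [OrderBot P] [LocallyFiniteOrder P]
    [DecidableRel ((· ≤ ·) : P → P → Prop)]
    (mu : P → P → ℂ)
    (hmu_self : ∀ p, mu p p = 1)
    (hmu_lt : ∀ p q : P, p < q → mu p q = -∑ r ∈ Finset.Ico p q, mu p r)
    (f : P → ℂ) (hf : ∀ p, f p ≠ 0)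
    (hsemi : ∀ p q : P, f (p ⊓ q) * f (p ⊔ q) = f p * f q)
    (g : P → ℂ) (hg : ∀ p, g p = (f p)⁻¹)
    {n : ℕ}
    (x : Fin n → P)
    (hord : ∀ i j, x i ≤ x j → i ≤ j)
    (hlower : ∀ i (z : P), z ≤ x i → ∃ k, x k = z)
    (l : Fin n → ℂ)
    (hl : ∀ i, l i = ∑ z ∈ (Finset.Icc ⊥ (x i)).filter
        (fun z => ∀ j, j < i → ¬ z ≤ x j),
      ∑ w ∈ Finset.Icc ⊥ z, g w * mu w z)
    (hl0 : ∀ i, l i ≠ 0)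
    (lam : ℂ) (v : Fin n → ℂ) (hv : v ≠ 0)
    (heig : (Matrix.of fun i j => f (x i ⊓ x j)).mulVec v =
      lam • (Matrix.of fun i j => f (x i ⊔ x j)).mulVec v) :
    ‖lam‖ ≤
      (⨅ p : Fin n × Fin n, ‖f (x p.1 ⊔ x p.2)‖)⁻¹ *
        (⨅ i, ‖l i‖)⁻¹ *
        ((Nat.fib (n + 1) : ℝ) * ((Nat.fib (n + 3) : ℝ) - 2)) := by
  obtain rfl : g = f⁻¹ := funext hg
  have hinj : Function.Injective x := fun i j h => le_antisymm (hord i j h.le) (hord j i h.ge)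
  have hS : IsLowerSet (Set.range x) := by
    rintro _ z hz ⟨i, rfl⟩
    exact hlower i z hz
  have hl_eq : l = fun k => ∑ w ∈ Icc ⊥ (x k), f⁻¹ w * mu w (x k) :=
    funext fun i => by rw [hl i, filter_Icc_bot_eq_singleton hord hS i, sum_singleton]
  have hw := joinMatrix_inv_mulVec_eq_smul hf hsemi heig
  rw [meetMatrix_eq_zetaMatrix_mul_diagonal_mul_transpose hmu_self hmu_lt hinj hS, ← hl_eq,
    ← zetaMatrix_map (algebraMap ℝ ℂ)] at hw
  have hw0 : diagonal (f ∘ x) *ᵥ v ≠ 0 := by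
    simpa [mulVec_diagonal, funext_iff, hf] using hv
  obtain ⟨k, hk⟩ := exists_norm_mul_le_mul_fib_of_mulVec_eq_smul
    (zetaMatrix_isLowerTriangular hord) zetaMatrix_apply_self zetaMatrix_apply_mem_Icc
    (fun a b => norm_inv_le_inv_iInf_norm (fun p : Fin n × Fin n => hf (x p.1 ⊔ x p.2)) (a, b))
    hw0 hw
  have := le_inv_iInf_norm_mul_of_mul_norm_le hl0 (norm_nonneg lam) k hk
  linarith

/-- **local upper bound.** For lower closed `S`, every `[S]_f`-eigenvalue
`λ` of `(S)_f` satisfies `|λ| ≤ c_f⁻¹ m_g⁻¹ F (n+1) (F (n+3) − 2)`, where `F` is the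
Fibonacci sequence with `F 1 = F 2 = 1`, `c_f = min_{i,j} |f (x i ∨ x j)|` and
`m_g = min_i |l i|`. -/
theorem local_upper_bound_meet_wrt_join
    {P : Type*} [Lattice P] [OrderBot P] [LocallyFiniteOrder P]
    [DecidableRel ((· ≤ ·) : P → P → Prop)]
    (mu : P → P → ℂ)
    (hmu_self : ∀ p, mu p p = 1)
    (hmu_lt : ∀ p q : P, p < q → mu p q = -∑ r ∈ Finset.Ico p q, mu p r)
    (hmu_nle : ∀ p q : P, ¬ p ≤ q → mu p q = 0)
    (f : P → ℂ) (hf : ∀ p, f p ≠ 0)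
    (hsemi : ∀ p q : P, f (p ⊓ q) * f (p ⊔ q) = f p * f q)
    (g : P → ℂ) (hg : ∀ p, g p = (f p)⁻¹)
    {n : ℕ} (hn : 0 < n)
    (x : Fin n → P) (hinj : Function.Injective x)
    (hord : ∀ i j, x i ≤ x j → i ≤ j)
    (hlower : ∀ i (z : P), z ≤ x i → ∃ k, x k = z)
    (l : Fin n → ℂ)
    (hl : ∀ i, l i = ∑ z ∈ (Finset.Icc ⊥ (x i)).filter
        (fun z => ∀ j, j < i → ¬ z ≤ x j),
      ∑ w ∈ Finset.Icc ⊥ z, g w * mu w z)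
    (hl0 : ∀ i, l i ≠ 0)
    (lam : ℂ) (v : Fin n → ℂ) (hv : v ≠ 0)
    (heig : (Matrix.of fun i j => f (x i ⊓ x j)).mulVec v =
      lam • (Matrix.of fun i j => f (x i ⊔ x j)).mulVec v) :
    ‖lam‖ ≤
      (⨅ p : Fin n × Fin n, ‖f (x p.1 ⊔ x p.2)‖)⁻¹ *
        (⨅ i, ‖l i‖)⁻¹ *
        ((Nat.fib (n + 1) : ℝ) * ((Nat.fib (n + 3) : ℝ) - 2)) :=
  local_upper_bound_meet_wrt_join_general mu hmu_self hmu_lt f hf hsemi g hg x hord hlower l hl hl0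
    lam v hv heig
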